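/- arXiv:1905.08429 — 5 statements merged into one kernel-verified Lean document; each statement's English description precedes it below -/
import Mathlib

section
/- (Complex Pythagorean theorem, measure form) Let H = ⊕ᵢ Wᵢ be an orthogonal decomposition of a complex Hilbert space into finitely many mutually orthogonal closed complex subspaces, v ∈ H nonzero, and Pᵢ : ℂv → Wᵢ the orthogonal projections. Then for any measurable set U ⊂ ℂv, Σᵢ |Pᵢ(U)| = |U|, where |·| denotes 2-dimensional Hausdorff measure. -/
open MeasureTheory
open scoped MeasureTheory NNReal ENNReal

/-! Writing `U = {c • v | c ∈ U'}` with `U' ⊆ ℂ`, each `Pᵢ(U) = {c • Pᵢ v | c ∈ U'}`, and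
`c ↦ c • w` scales distances by `‖w‖`, hence `μH[2]` by `‖w‖²`. Both sides are therefore
`μH[2] U'` times `∑ ‖Pᵢ v‖²` and `‖v‖²` respectively, which agree by Pythagoras. -/

theorem Dilation.hausdorffMeasure_image {X Y F : Type*} [EMetricSpace X] [EMetricSpace Y]
    [MeasurableSpace X] [BorelSpace X] [MeasurableSpace Y] [BorelSpace Y]
    [FunLike F X Y] [DilationClass F X Y] (f : F) {d : ℝ} (hd : 0 ≤ d) (s : Set X) :
    μH[d] (f '' s) = (ratio f : ℝ≥0∞) ^ d * μH[d] s := by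
  refine le_antisymm ((lipschitz f).hausdorffMeasure_image_le hd s) ?_
  have hr : (ratio f : ℝ≥0∞) ^ d * ((ratio f)⁻¹ : ℝ≥0) ^ d = 1 := by
    rw [← ENNReal.mul_rpow_of_nonneg _ _ hd, ← ENNReal.coe_mul,
      mul_inv_cancel₀ (ratio_ne_zero f), ENNReal.coe_one, ENNReal.one_rpow]
  calc (ratio f : ℝ≥0∞) ^ d * μH[d] s
      ≤ (ratio f : ℝ≥0∞) ^ d * (((ratio f)⁻¹ : ℝ≥0) ^ d * μH[d] (f '' s)) :=
        mul_le_mul_right ((antilipschitz f).le_hausdorffMeasure_image hd s) _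
    _ = μH[d] (f '' s) := by rw [← mul_assoc, hr, one_mul]

theorem hausdorffMeasure_image_smul_right {𝕜 E : Type*} [NormedField 𝕜] [NormedAddCommGroup E]
    [NormedSpace 𝕜 E] [MeasurableSpace 𝕜] [BorelSpace 𝕜] [MeasurableSpace E] [BorelSpace E]
    (w : E) {d : ℝ} (hd : 0 < d) (s : Set 𝕜) :
    μH[d] ((· • w) '' s) = (‖w‖₊ : ℝ≥0∞) ^ d * μH[d] s := by
  obtain rfl | hw := eq_or_ne w 0
  · have := Measure.nullSingletonClass_hausdorff E hd
    rw [nnnorm_zero, ENNReal.coe_zero, ENNReal.zero_rpow_of_pos hd, zero_mul]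
    exact measure_mono_null (by simp) (measure_singleton 0)
  let f : 𝕜 →ᵈ E := Dilation.mkOfNNDistEq (· • w)
    ⟨‖w‖₊, nnnorm_ne_zero_iff.mpr hw, fun x y => by
      rw [nndist_eq_nnnorm, nndist_eq_nnnorm, ← sub_smul, nnnorm_smul, mul_comm]⟩
  have hratio : ‖w‖₊ = Dilation.ratio f :=
    Dilation.ratio_unique_of_nndist_ne_zero (x := 1) (y := 0) (by simp)
      (by simp [f, nndist_eq_nnnorm])
  exact hratio ▸ Dilation.hausdorffMeasure_image f hd.le s

theorem OrthogonalFamily.sum_norm_sq_starProjection {𝕜 E ι : Type*} [RCLike 𝕜]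
    [NormedAddCommGroup E] [InnerProductSpace 𝕜 E] [Fintype ι] {V : ι → Submodule 𝕜 E}
    [∀ i, CompleteSpace (V i)] (hV : OrthogonalFamily 𝕜 (fun i => V i) fun i => (V i).subtypeₗᵢ)
    {x : E} (hx : x ∈ iSup V) : ∑ i, ‖(V i).starProjection x‖ ^ 2 = ‖x‖ ^ 2 := by
  conv_rhs => rw [← hV.sum_projection_of_mem_iSup x hx]
  exact (hV.norm_sum (fun i => (V i).orthogonalProjectionOnto x) Finset.univ).symm

theorem Submodule.image_smul_preimage_smul_of_subset_span {𝕜 E : Type*} [Semiring 𝕜]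
    [AddCommMonoid E] [Module 𝕜 E] {v : E} {U : Set E} (hU : U ⊆ span 𝕜 {v}) :
    (· • v) '' ((· • v) ⁻¹' U : Set 𝕜) = U :=
  Set.image_preimage_eq_of_subset fun _ hx => mem_span_singleton.mp (hU hx)

theorem stmt4_general {H : Type*} [NormedAddCommGroup H] [InnerProductSpace ℂ H]
    [MeasurableSpace H] [BorelSpace H]
    {n : ℕ} (W : Fin n → Submodule ℂ H) [∀ i, CompleteSpace (W i)]
    (horth : ∀ i j, i ≠ j → ∀ x ∈ W i, ∀ y ∈ W j, (inner ℂ x y : ℂ) = 0)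
    (hsum : (⨆ i, W i) = ⊤)
    (v : H)
    (U : Set H) (hU : U ⊆ (Submodule.span ℂ {v} : Submodule ℂ H)) :
    ∑ i, μH[2] ((fun x => (Submodule.orthogonalProjectionOnto (W i) x : H)) '' U) = μH[2] U := by
  have hV : OrthogonalFamily ℂ (fun i => W i) fun i => (W i).subtypeₗᵢ :=
    fun i j hij x y => horth i j hij x x.2 y y.2
  have hpyth : ∑ i, ‖(W i).starProjection v‖₊ ^ 2 = ‖v‖₊ ^ 2 :=
    NNReal.eq <| by push_cast; exact hV.sum_norm_sq_starProjection (hsum ▸ Submodule.mem_top)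
  set U' : Set ℂ := (· • v) ⁻¹' U
  have hline : (· • v) '' U' = U := Submodule.image_smul_preimage_smul_of_subset_span hU
  have hproj : ∀ i, (fun x => (Submodule.orthogonalProjectionOnto (W i) x : H)) '' U
      = (· • (W i).starProjection v) '' U' := fun i => by
    rw [← hline, Set.image_image]
    simp only [map_smul, Submodule.coe_smul]; rfl
  calc ∑ i, μH[2] ((fun x => (Submodule.orthogonalProjectionOnto (W i) x : H)) '' U)
      = (∑ i, (‖(W i).starProjection v‖₊ : ℝ≥0∞) ^ (2 : ℝ)) * μH[2] U' := by
        simp only [hproj, hausdorffMeasure_image_smul_right _ two_pos, Finset.sum_mul]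
    _ = (‖v‖₊ : ℝ≥0∞) ^ (2 : ℝ) * μH[2] U' := by
        simp only [ENNReal.rpow_two, ← ENNReal.coe_pow, ← ENNReal.ofNNReal_finsetSum, hpyth]
    _ = μH[2] U := by rw [← hausdorffMeasure_image_smul_right _ two_pos, hline]

/-- Complex Pythagorean theorem, measure form: if `H = ⊕ᵢ Wᵢ` is an orthogonal
decomposition into finitely many mutually orthogonal closed complex subspaces and `v ≠ 0`,
then for any measurable `U ⊆ ℂv`, `Σᵢ |Pᵢ(U)| = |U|` for 2-dimensional Hausdorff measure. -/
theorem stmt4 {H : Type*} [NormedAddCommGroup H] [InnerProductSpace ℂ H] [CompleteSpace H]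
    [MeasurableSpace H] [BorelSpace H]
    {n : ℕ} (W : Fin n → Submodule ℂ H) [∀ i, CompleteSpace (W i)]
    (horth : ∀ i j, i ≠ j → ∀ x ∈ W i, ∀ y ∈ W j, (inner ℂ x y : ℂ) = 0)
    (hsum : (⨆ i, W i) = ⊤)
    (v : H) (hv : v ≠ 0)
    (U : Set H) (hU : U ⊆ (Submodule.span ℂ {v} : Submodule ℂ H)) (hUm : MeasurableSet U) :
    ∑ i, μH[2] ((fun x => (Submodule.orthogonalProjectionOnto (W i) x : H)) '' U) = μH[2] U :=
  stmt4_general W horth hsum v U hU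
end

section
/- For a nonzero vector Ψ = Σᵢ cᵢ|i⟩ in a complex Hilbert space expanded in an orthonormal basis {|i⟩}, the projection factor of the complex line ℂΨ onto the complex line ℂ|i⟩ equals |cᵢ|²/‖Ψ‖², i.e. it equals the Born rule probability |⟨i|Ψ⟩|²/‖Ψ‖² of result i. -/
/-!
Write `U = {z • Ψ | z ∈ V}` for some `V ⊆ ℂ`. Projecting onto the unit vector `e i` sends `z • Ψ`
to `z • (cᵢ • e i)`, so both `U` and its projection are images of the same `V` under maps
`z ↦ z • w`. Such a map is a dilation by `‖w‖` followed by an isometry, so it multiplies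
`d`-dimensional Hausdorff measure by `‖w‖ ^ d`, and the ratio is `‖cᵢ • e i‖² / ‖Ψ‖²`.
-/

open MeasureTheory
open scoped MeasureTheory Pointwise

section SmulRightImage

variable {𝕜 E : Type*} [RCLike 𝕜] [NormedAddCommGroup E] [NormedSpace 𝕜 E]
  [MeasurableSpace E] [BorelSpace E] {d : ℝ}

/-- Generalizes `MeasureTheory.hausdorffMeasure_smul_right_image` from real lines and `d = 1`. -/
theorem hausdorffMeasure_smul_right_image' (hd : 0 < d) (v : E) (s : Set 𝕜) :
    μH[d] ((· • v) '' s) = ENNReal.ofReal (‖v‖ ^ d) * μH[d] s := by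
  obtain rfl | hv := eq_or_ne v 0
  · have := Measure.nullSingletonClass_hausdorff E hd
    have hsub : (· • (0 : E)) '' s ⊆ {0} := by
      rintro _ ⟨z, -, rfl⟩
      exact smul_zero z
    rw [measure_mono_null hsub (measure_singleton 0), norm_zero, Real.zero_rpow hd.ne',
      ENNReal.ofReal_zero, zero_mul]
  have hn : ‖v‖ ≠ 0 := norm_ne_zero_iff.mpr hv
  -- `z • v = (‖v‖ z) • u` with `u = v / ‖v‖`, and `z ↦ z • u` is an isometry
  set u : E := ((‖v‖⁻¹ : ℝ) : 𝕜) • v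
  have iso_smul : Isometry (LinearMap.toSpanSingleton 𝕜 E u) := by
    refine AddMonoidHomClass.isometry_of_norm _ fun z => ?_
    rw [LinearMap.toSpanSingleton_apply, norm_smul, norm_smul, RCLike.norm_ofReal, abs_inv,
      abs_norm, inv_mul_cancel₀ hn, mul_one]
  have hdecomp : (· • v) '' s = LinearMap.toSpanSingleton 𝕜 E u '' (((‖v‖ : ℝ) : 𝕜) • s) := by
    rw [← Set.image_smul, Set.image_image]
    refine Set.image_congr fun z _ => ?_
    rw [LinearMap.toSpanSingleton_apply, smul_smul, smul_eq_mul, mul_right_comm,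
      ← RCLike.ofReal_mul, mul_inv_cancel₀ hn, RCLike.ofReal_one, one_mul]
  rw [hdecomp, iso_smul.hausdorffMeasure_image (Or.inl hd.le),
    Measure.hausdorffMeasure_smul₀ hd.le (RCLike.ofReal_ne_zero.mpr hn), ENNReal.smul_def,
    smul_eq_mul, ← ENNReal.ofReal_coe_nnreal, NNReal.coe_rpow, coe_nnnorm, RCLike.norm_ofReal,
    abs_norm]

theorem hausdorffMeasure_smul_right_image_div (hd : 0 < d) (v w : E) (s : Set 𝕜)
    (h0 : μH[d] ((· • v) '' s) ≠ 0) (htop : μH[d] ((· • v) '' s) ≠ ⊤) :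
    μH[d] ((· • w) '' s) / μH[d] ((· • v) '' s) = ENNReal.ofReal ((‖w‖ / ‖v‖) ^ d) := by
  simp only [hausdorffMeasure_smul_right_image' hd] at h0 htop ⊢
  obtain ⟨hv, hs0⟩ := mul_ne_zero_iff.mp h0
  have hstop : μH[d] s ≠ ⊤ := fun h => htop (by rw [h, ENNReal.mul_top hv])
  rw [ENNReal.mul_div_mul_right _ _ hs0 hstop,
    ← ENNReal.ofReal_div_of_pos (ENNReal.ofReal_pos.mp (pos_iff_ne_zero.mpr hv)),
    Real.div_rpow (norm_nonneg w) (norm_nonneg v)]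

end SmulRightImage

theorem stmt5_general {H : Type*} [NormedAddCommGroup H] [InnerProductSpace ℂ H]
    [MeasurableSpace H] [BorelSpace H]
    {ι : Type*} [Fintype ι] (e : ι → H) (he : Orthonormal ℂ e)
    (c : ι → ℂ) (Ψ : H) (hΨ : Ψ = ∑ i, c i • e i) (i : ι)
    (U : Set H) (hU : U ⊆ (Submodule.span ℂ {Ψ} : Submodule ℂ H))
    (hU0 : 0 < μH[2] U) (hUt : μH[2] U < ⊤) :
    μH[2] ((fun x => ((Submodule.span ℂ {e i}).orthogonalProjectionOnto x : H)) '' U) / μH[2] U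
        = ENNReal.ofReal (‖c i‖ ^ 2 / ‖Ψ‖ ^ 2)
      ∧ ‖c i‖ ^ 2 / ‖Ψ‖ ^ 2 = ‖(inner ℂ (e i) Ψ : ℂ)‖ ^ 2 / ‖Ψ‖ ^ 2 := by
  have hc : inner ℂ (e i) Ψ = c i := hΨ ▸ he.inner_right_fintype c i
  obtain ⟨V, rfl⟩ : ∃ V : Set ℂ, (· • Ψ) '' V = U :=
    ⟨_, Set.image_preimage_eq_of_subset fun x hx => Submodule.mem_span_singleton.mp (hU hx)⟩
  have hproj : (fun x => ((Submodule.span ℂ {e i}).orthogonalProjectionOnto x : H)) ''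
      ((· • Ψ) '' V) = (· • (c i • e i)) '' V := by
    rw [Set.image_image]
    refine Set.image_congr fun z _ => ?_
    rw [← Submodule.starProjection_apply, Submodule.starProjection_unit_singleton ℂ (he.1 i),
      inner_smul_right, hc, mul_smul]
  refine ⟨?_, by rw [hc]⟩
  rw [hproj, hausdorffMeasure_smul_right_image_div two_pos _ _ _ hU0.ne' hUt.ne, norm_smul,
    he.1 i, mul_one, Real.rpow_two, div_pow]

/-- For a nonzero `Ψ = Σᵢ cᵢ|i⟩` expanded in an orthonormal family, the
projection factor of `ℂΨ` onto `ℂ|i⟩` (the ratio of 2-dimensional Hausdorff measures of a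
measurable `U ⊆ ℂΨ` of finite positive measure and of its orthogonal projection) equals
`|cᵢ|²/‖Ψ‖²`, i.e. the Born rule probability `|⟨i|Ψ⟩|²/‖Ψ‖²`. -/
theorem stmt5 {H : Type*} [NormedAddCommGroup H] [InnerProductSpace ℂ H] [CompleteSpace H]
    [MeasurableSpace H] [BorelSpace H]
    {ι : Type*} [Fintype ι] (e : ι → H) (he : Orthonormal ℂ e)
    (c : ι → ℂ) (Ψ : H) (hΨ : Ψ = ∑ i, c i • e i) (hΨ0 : Ψ ≠ 0) (i : ι)
    (U : Set H) (hU : U ⊆ (Submodule.span ℂ {Ψ} : Submodule ℂ H)) (hUm : MeasurableSet U)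
    (hU0 : 0 < μH[2] U) (hUt : μH[2] U < ⊤) :
    μH[2] ((fun x => ((Submodule.span ℂ {e i}).orthogonalProjectionOnto x : H)) '' U) / μH[2] U
        = ENNReal.ofReal (‖c i‖ ^ 2 / ‖Ψ‖ ^ 2)
      ∧ ‖c i‖ ^ 2 / ‖Ψ‖ ^ 2 = ‖(inner ℂ (e i) Ψ : ℂ)‖ ^ 2 / ‖Ψ‖ ^ 2 :=
  stmt5_general e he c Ψ hΨ i U hU hU0 hUt
end

section
/- Let Ψ be a nonzero vector in a complex Hilbert space with orthogonal decomposition Ψ = Σᵢ ψᵢ into finitely many mutually orthogonal nonzero components ψᵢ. For any measurable U ⊂ ℂΨ with 0 < |U| < ∞, setting W_{U,i} = Pᵢ(U) (where Pᵢ : ℂΨ → ℂψᵢ is the orthogonal projection), the fraction f_{U,i} = |W_{U,i}| / Σⱼ|W_{U,j}| equals ‖ψᵢ‖²/‖Ψ‖² and is independent of U. -/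
/-!
Write `U = {c • Ψ | c ∈ S}`. The projection onto `ℂ ψᵢ` sends `c • Ψ` to `c • ψᵢ`, and
`c ↦ c • v` multiplies distances by `‖v‖`, hence 2-dimensional Hausdorff measure by `‖v‖²`.
So `|W_{U,i}| = ‖ψᵢ‖² |S|`, and Pythagoras `Σⱼ ‖ψⱼ‖² = ‖Ψ‖²` gives the ratio.
-/

open MeasureTheory
open scoped InnerProductSpace

theorem hausdorffMeasure_smul_right_image_of_pos {𝕜 E : Type*} [NormedField 𝕜]
    [MeasurableSpace 𝕜] [BorelSpace 𝕜] [NormedAddCommGroup E] [NormedSpace 𝕜 E]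
    [MeasurableSpace E] [BorelSpace E] {d : ℝ} (hd : 0 < d) (v : E) (s : Set 𝕜) :
    μH[d] ((· • v) '' s) = ‖v‖ₑ ^ d * μH[d] s := by
  obtain rfl | hv := eq_or_ne v 0
  · have := Measure.nullSingletonClass_hausdorff E hd
    obtain rfl | hs := s.eq_empty_or_nonempty
    · simp
    simp [hs, hd]
  have hdist (a b : 𝕜) : dist (a • v) (b • v) = ‖v‖ * dist a b := by
    rw [dist_eq_norm, ← sub_smul, norm_smul, dist_eq_norm, mul_comm]
  have hlip : LipschitzWith ‖v‖₊ (· • v : 𝕜 → E) :=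
    .of_dist_le_mul fun a b => (hdist a b).le
  have hanti : AntilipschitzWith ‖v‖₊⁻¹ (· • v : 𝕜 → E) :=
    .of_le_mul_dist fun a b => by
      rw [hdist, NNReal.coe_inv, coe_nnnorm, inv_mul_cancel_left₀ (norm_ne_zero_iff.2 hv)]
  refine le_antisymm (hlip.hausdorffMeasure_image_le hd.le s) ?_
  calc ‖v‖ₑ ^ d * μH[d] s
      ≤ ‖v‖ₑ ^ d * ((‖v‖₊⁻¹ : NNReal) ^ d * μH[d] ((· • v) '' s)) := by
        gcongr; exact hanti.le_hausdorffMeasure_image hd.le s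
    _ = μH[d] ((· • v) '' s) := by
        rw [← mul_assoc, ENNReal.coe_inv (nnnorm_ne_zero_iff.2 hv), ← enorm_eq_nnnorm,
          ← ENNReal.mul_rpow_of_nonneg _ _ hd.le,
          ENNReal.mul_inv_cancel (enorm_ne_zero.2 hv) enorm_ne_top, ENNReal.one_rpow, one_mul]

section PairwiseOrthogonal

variable {𝕜 E ι : Type*} [RCLike 𝕜] [NormedAddCommGroup E] [InnerProductSpace 𝕜 E] [Fintype ι]
  {v : ι → E}

theorem inner_sum_of_pairwise_inner_eq_zero (hv : Pairwise fun i j => ⟪v i, v j⟫_𝕜 = 0)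
    (j : ι) : ⟪v j, ∑ i, v i⟫_𝕜 = (‖v j‖ : 𝕜) ^ 2 := by
  rw [inner_sum, Finset.sum_eq_single j (fun i _ hij => hv hij.symm) (by simp),
    inner_self_eq_norm_sq_to_K]

theorem norm_sum_sq_of_pairwise_inner_eq_zero (hv : Pairwise fun i j => ⟪v i, v j⟫_𝕜 = 0) :
    ‖∑ i, v i‖ ^ 2 = ∑ i, ‖v i‖ ^ 2 := by
  have h : (‖∑ i, v i‖ : 𝕜) ^ 2 = ∑ j, (‖v j‖ : 𝕜) ^ 2 := by
    rw [← inner_self_eq_norm_sq_to_K, sum_inner]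
    exact Finset.sum_congr rfl fun j _ => inner_sum_of_pairwise_inner_eq_zero hv j
  exact_mod_cast h

theorem starProjection_span_singleton_sum_of_pairwise_inner_eq_zero
    (hv : Pairwise fun i j => ⟪v i, v j⟫_𝕜 = 0) (j : ι) :
    (𝕜 ∙ v j).starProjection (∑ i, v i) = v j := by
  rw [Submodule.starProjection_singleton, inner_sum_of_pairwise_inner_eq_zero hv]
  push_cast
  obtain hj | hj := eq_or_ne (v j) 0
  · simp [hj]
  · rw [div_self (by simpa using hj), one_smul]

end PairwiseOrthogonal

theorem stmt6_general {H : Type*} [NormedAddCommGroup H] [InnerProductSpace ℂ H]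
    [MeasurableSpace H] [BorelSpace H]
    {n : ℕ} (ψ : Fin n → H)
    (horth : ∀ i j, i ≠ j → (inner ℂ (ψ i) (ψ j) : ℂ) = 0)
    (Ψ : H) (hΨ : Ψ = ∑ i, ψ i) (i : Fin n)
    (U : Set H) (hU : U ⊆ (Submodule.span ℂ {Ψ} : Submodule ℂ H))
    (hU0 : 0 < μH[2] U) (hUt : μH[2] U < ⊤) :
    μH[2] ((fun x => (Submodule.orthogonalProjection (Submodule.span ℂ {ψ i}) x : H)) '' U)
        / ∑ j, μH[2] ((fun x => (Submodule.orthogonalProjection (Submodule.span ℂ {ψ j}) x : H)) '' U)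
      = ENNReal.ofReal (‖ψ i‖ ^ 2 / ‖Ψ‖ ^ 2) := by
  obtain ⟨S, rfl⟩ : ∃ S : Set ℂ, (· • Ψ) '' S = U :=
    ⟨(· • Ψ) ⁻¹' U, Set.image_preimage_eq_of_subset fun x hx =>
      Submodule.mem_span_singleton.1 (hU hx)⟩
  have hproj (j : Fin n) :
      (fun x => ((ℂ ∙ ψ j).orthogonalProjectionOnto x : H)) '' ((· • Ψ) '' S) =
        (· • ψ j) '' S := by
    simp_rw [Set.image_image, ← Submodule.starProjection_apply, map_smul, hΨ,
      starProjection_span_singleton_sum_of_pairwise_inner_eq_zero horth]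
  have hμ (v : H) : μH[2] ((· • v) '' S) = ENNReal.ofReal (‖v‖ ^ 2) * μH[2] S := by
    rw [hausdorffMeasure_smul_right_image_of_pos two_pos, ENNReal.rpow_two,
      ← ofReal_norm, ENNReal.ofReal_pow (norm_nonneg v)]
  simp_rw [hproj, hμ] at hU0 hUt ⊢
  obtain ⟨hΨ0, hS0⟩ := mul_ne_zero_iff.1 hU0.ne'
  have hSt : μH[2] S ≠ ⊤ := (ENNReal.lt_top_of_mul_ne_top_right hUt.ne hΨ0).ne
  rw [← Finset.sum_mul, ENNReal.mul_div_mul_right _ _ hS0 hSt,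
    ← ENNReal.ofReal_sum_of_nonneg fun j _ => sq_nonneg _,
    ← norm_sum_sq_of_pairwise_inner_eq_zero horth, ← hΨ,
    ENNReal.ofReal_div_of_pos (ENNReal.ofReal_pos.1 (pos_iff_ne_zero.2 hΨ0))]

/-- For `Ψ = Σᵢ ψᵢ` with finitely many mutually orthogonal nonzero components
and any measurable `U ⊆ ℂΨ` with `0 < |U| < ∞`, the fraction
`f_{U,i} = |Pᵢ(U)| / Σⱼ|Pⱼ(U)|` equals `‖ψᵢ‖²/‖Ψ‖²`, independently of `U`. -/
theorem stmt6 {H : Type*} [NormedAddCommGroup H] [InnerProductSpace ℂ H] [CompleteSpace H]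
    [MeasurableSpace H] [BorelSpace H]
    {n : ℕ} (ψ : Fin n → H) (hψ0 : ∀ i, ψ i ≠ 0)
    (horth : ∀ i j, i ≠ j → (inner ℂ (ψ i) (ψ j) : ℂ) = 0)
    (Ψ : H) (hΨ : Ψ = ∑ i, ψ i) (hΨ0 : Ψ ≠ 0) (i : Fin n)
    (U : Set H) (hU : U ⊆ (Submodule.span ℂ {Ψ} : Submodule ℂ H)) (hUm : MeasurableSet U)
    (hU0 : 0 < μH[2] U) (hUt : μH[2] U < ⊤) :
    μH[2] ((fun x => (Submodule.orthogonalProjection (Submodule.span ℂ {ψ i}) x : H)) '' U)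
        / ∑ j, μH[2] ((fun x => (Submodule.orthogonalProjection (Submodule.span ℂ {ψ j}) x : H)) '' U)
      = ENNReal.ofReal (‖ψ i‖ ^ 2 / ‖Ψ‖ ^ 2) :=
  stmt6_general ψ horth Ψ hΨ i U hU hU0 hUt
end

section
/- Let Ψ = Σᵢ ψᵢ be a nonzero vector in a real Hilbert space, decomposed into finitely many mutually orthogonal nonzero components ψᵢ, with Pᵢ : ℝΨ → ℝψᵢ the orthogonal projections. For any measurable U ⊂ ℝΨ with 0 < |U| < ∞ (1-dimensional Lebesgue measure), the fraction f_{U,i} = |Pᵢ(U)| / Σⱼ |Pⱼ(U)| equals ‖ψᵢ‖ / Σⱼ ‖ψⱼ‖, independent of U. -/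
/-!
Every point of `U ⊆ ℝΨ` is `t • Ψ`, and by orthogonality `Pⱼ (t • Ψ) = t • ψⱼ`, so `Pⱼ(U)` is the
image of one parameter set `T ⊆ ℝ` under `t ↦ t • ψⱼ`. Hausdorff measure scales by `‖ψⱼ‖` under
such a map, so `|Pⱼ(U)| = ‖ψⱼ‖ |T|`, and `|T|` cancels from the fraction: it is positive and
finite because `|U| = ‖Ψ‖ |T|`.
-/

open MeasureTheory
open scoped ENNReal NNReal InnerProductSpace

theorem Submodule.starProjection_span_singleton_sum_of_pairwise_inner_eq_zero
    {𝕜 E ι : Type*} [RCLike 𝕜] [NormedAddCommGroup E] [InnerProductSpace 𝕜 E] [Fintype ι]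
    {ψ : ι → E} (horth : Pairwise fun i j => ⟪ψ i, ψ j⟫_𝕜 = 0) (j : ι) :
    (𝕜 ∙ ψ j).starProjection (∑ i, ψ i) = ψ j := by
  rcases eq_or_ne (ψ j) 0 with h | h
  · simp [h]
  rw [starProjection_singleton, inner_sum,
    Finset.sum_eq_single j (fun k _ hk => horth hk.symm) (by simp), inner_self_eq_norm_sq_to_K,
    ← RCLike.ofReal_pow, div_self (by simpa using h), one_smul]

theorem hausdorffMeasure_one_image_of_subset_span_singleton {E F : Type*} [AddCommGroup E]
    [Module ℝ E] [NormedAddCommGroup F] [NormedSpace ℝ F] [MeasurableSpace F] [BorelSpace F]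
    (L : E →ₗ[ℝ] F) {v : E} {U : Set E} (hU : U ⊆ ℝ ∙ v) :
    μH[1] (L '' U) = ‖L v‖₊ * μH[1] {t : ℝ | t • v ∈ U} := by
  have hU_eq : (fun t : ℝ => t • v) '' {t | t • v ∈ U} = U :=
    Set.image_preimage_eq_of_subset fun x hx => Submodule.mem_span_singleton.mp (hU hx)
  conv_lhs => rw [← hU_eq, Set.image_image]
  simp only [map_smul]
  exact hausdorffMeasure_smul_right_image (L v) _

theorem ENNReal.coe_nnnorm_div_sum_nnnorm {ι E : Type*} [Fintype ι] [SeminormedAddCommGroup E]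
    (f : ι → E) (i : ι) :
    (‖f i‖₊ : ℝ≥0∞) / ∑ j, (‖f j‖₊ : ℝ≥0∞) = ENNReal.ofReal (‖f i‖ / ∑ j, ‖f j‖) := by
  rcases eq_or_ne (∑ j, ‖f j‖₊) 0 with h | h
  · have hi : ‖f i‖₊ = 0 := Finset.sum_eq_zero_iff.mp h i (Finset.mem_univ i)
    have hsum : ∑ j, ‖f j‖ = 0 := by simpa using congrArg ((↑) : ℝ≥0 → ℝ) h
    simp [hi, hsum]
  · rw [← ENNReal.ofNNReal_finsetSum, ← ENNReal.coe_div h, ← ENNReal.ofReal_coe_nnreal]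
    push_cast
    rfl

theorem stmt8_general {H : Type*} [NormedAddCommGroup H] [InnerProductSpace ℝ H]
    [MeasurableSpace H] [BorelSpace H]
    {n : ℕ} (ψ : Fin n → H)
    (horth : ∀ i j, i ≠ j → (inner ℝ (ψ i) (ψ j) : ℝ) = 0)
    (Ψ : H) (hΨ : Ψ = ∑ i, ψ i) (hΨ0 : Ψ ≠ 0) (i : Fin n)
    (U : Set H) (hU : U ⊆ (Submodule.span ℝ {Ψ} : Submodule ℝ H))
    (hU0 : 0 < μH[1] U) (hUt : μH[1] U < ⊤) :
    μH[1] ((fun x => (Submodule.orthogonalProjection (Submodule.span ℝ {ψ i}) x : H)) '' U)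
        / ∑ j, μH[1] ((fun x => (Submodule.orthogonalProjection (Submodule.span ℝ {ψ j}) x : H)) '' U)
      = ENNReal.ofReal (‖ψ i‖ / ∑ j, ‖ψ j‖) := by
  subst hΨ
  set m := μH[1] {t : ℝ | t • ∑ i, ψ i ∈ U}
  have hU_eq : μH[1] U = ‖∑ i, ψ i‖₊ * m := by
    simpa only [LinearMap.id_coe, id_eq, Set.image_id'] using
      hausdorffMeasure_one_image_of_subset_span_singleton LinearMap.id hU
  have hproj (j : Fin n) : μH[1] ((ℝ ∙ ψ j).starProjection '' U) = ‖ψ j‖₊ * m := by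
    simpa only [ContinuousLinearMap.coe_coe,
      Submodule.starProjection_span_singleton_sum_of_pairwise_inner_eq_zero horth] using
      hausdorffMeasure_one_image_of_subset_span_singleton (ℝ ∙ ψ j).starProjection.toLinearMap hU
  have hm0 : m ≠ 0 := by rintro h; simp [hU_eq, h] at hU0
  have hmtop : m ≠ ⊤ := by rintro h; simp [hU_eq, h, hΨ0] at hUt
  simp only [Submodule.coe_orthogonalProjectionOnto_apply, hproj, ← Finset.sum_mul,
    ENNReal.mul_div_mul_right _ _ hm0 hmtop, ENNReal.coe_nnnorm_div_sum_nnnorm]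

/-- For `Ψ = Σᵢ ψᵢ` in a real Hilbert space, with finitely many mutually
orthogonal nonzero components, and any measurable `U ⊆ ℝΨ` with `0 < |U| < ∞` for
1-dimensional Hausdorff measure, the fraction `|Pᵢ(U)| / Σⱼ |Pⱼ(U)|` equals
`‖ψᵢ‖ / Σⱼ ‖ψⱼ‖`, independently of `U`. -/
theorem stmt8 {H : Type*} [NormedAddCommGroup H] [InnerProductSpace ℝ H] [CompleteSpace H]
    [MeasurableSpace H] [BorelSpace H]
    {n : ℕ} (ψ : Fin n → H) (hψ0 : ∀ i, ψ i ≠ 0)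
    (horth : ∀ i j, i ≠ j → (inner ℝ (ψ i) (ψ j) : ℝ) = 0)
    (Ψ : H) (hΨ : Ψ = ∑ i, ψ i) (hΨ0 : Ψ ≠ 0) (i : Fin n)
    (U : Set H) (hU : U ⊆ (Submodule.span ℝ {Ψ} : Submodule ℝ H)) (hUm : MeasurableSet U)
    (hU0 : 0 < μH[1] U) (hUt : μH[1] U < ⊤) :
    μH[1] ((fun x => (Submodule.orthogonalProjection (Submodule.span ℝ {ψ i}) x : H)) '' U)
        / ∑ j, μH[1] ((fun x => (Submodule.orthogonalProjection (Submodule.span ℝ {ψ j}) x : H)) '' U)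
      = ENNReal.ofReal (‖ψ i‖ / ∑ j, ‖ψ j‖) :=
  stmt8_general ψ horth Ψ hΨ hΨ0 i U hU hU0 hUt
end

section
/- Let Ψ = c₁ψ₁ + c₂ψ₂ in a complex Hilbert space with ψ₁, ψ₂ orthonormal and |c₁|² + |c₂|² = 1. For any measurable U ⊂ ℂΨ of finite positive 2-dimensional measure, with W₁ and W₂ the orthogonal projections of U onto ℂψ₁ and ℂψ₂, one has |W₁| = |c₁|²·|U|, |W₂| = |c₂|²·|U|, and |W₁| + |W₂| = |U|. -/
/-!
On the complex line `ℂΨ` spanned by a unit vector, the orthogonal projection onto the line `ℂψ`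
of another unit vector acts as `aΨ ↦ a⟪ψ, Ψ⟫ψ`, i.e. as a similarity of ratio `|⟪ψ, Ψ⟫|`.
A similarity of ratio `r` scales the `d`-dimensional Hausdorff measure by `r ^ d`; for
`Ψ = c₁ψ₁ + c₂ψ₂` with `ψ₁, ψ₂` orthonormal the ratios are `|c₁|, |c₂|`, and
`|c₁|² + |c₂|² = 1` gives the sum.
-/

open MeasureTheory
open scoped ENNReal NNReal InnerProductSpace

theorem hausdorffMeasure_image_of_edist_eq {X Y : Type*} [EMetricSpace X] [EMetricSpace Y]
    [MeasurableSpace X] [BorelSpace X] [MeasurableSpace Y] [BorelSpace Y]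
    {f : X → Y} {r : ℝ≥0} {s : Set X} {d : ℝ}
    (hf : ∀ x ∈ s, ∀ y ∈ s, edist (f x) (f y) = r * edist x y) (hd : 0 < d) :
    μH[d] (f '' s) = (r : ℝ≥0∞) ^ d * μH[d] s := by
  rcases eq_or_ne r 0 with rfl | hr
  · have := Measure.nullSingletonClass_hausdorff (X := Y) hd
    have hsub : (f '' s).Subsingleton := by
      rintro _ ⟨x, hx, rfl⟩ _ ⟨y, hy, rfl⟩
      simpa using hf x hx y hy
    simp [hsub.measure_zero, hd]
  have hlip : LipschitzOnWith r f s := fun x hx y hy => (hf x hx y hy).le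
  refine le_antisymm (hlip.hausdorffMeasure_image_le hd.le) ?_
  have hanti : AntilipschitzWith r⁻¹ (fun x : s => f x) := fun x y => by
    rw [hf x x.2 y y.2, ← mul_assoc, ENNReal.coe_inv hr,
      ENNReal.inv_mul_cancel (by simpa) (by simp), one_mul, Subtype.edist_eq]
  have hsub : μH[d] s = μH[d] (Set.univ : Set s) := by
    rw [← (isometry_subtype_coe (s := s)).hausdorffMeasure_image (Or.inl hd.le), Set.image_univ,
      Subtype.range_coe]
  have himg : (fun x : s => f x) '' Set.univ = f '' s := by
    rw [Set.image_univ, Set.range_comp' f Subtype.val, Subtype.range_coe]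
  have := hanti.le_hausdorffMeasure_image hd.le Set.univ
  rwa [← hsub, himg, ENNReal.coe_inv hr, ENNReal.inv_rpow, ← ENNReal.mul_le_iff_le_inv]
    at this <;> simp [hr]

section Projection

variable {𝕜 E : Type*} [RCLike 𝕜] [NormedAddCommGroup E] [InnerProductSpace 𝕜 E]
  {ψ Ψ : E}

theorem nnnorm_starProjection_unit_singleton_of_mem_span (hψ : ‖ψ‖ = 1) (hΨ : ‖Ψ‖ = 1)
    {v : E} (hv : v ∈ 𝕜 ∙ Ψ) :
    ‖(𝕜 ∙ ψ).starProjection v‖₊ = ‖⟪ψ, Ψ⟫_𝕜‖₊ * ‖v‖₊ := by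
  obtain ⟨a, rfl⟩ := Submodule.mem_span_singleton.mp hv
  ext
  simp only [coe_nnnorm, NNReal.coe_mul, Submodule.starProjection_unit_singleton 𝕜 hψ,
    inner_smul_right, norm_smul, norm_mul, hψ, hΨ]
  ring

theorem hausdorffMeasure_starProjection_image_of_subset_span [MeasurableSpace E] [BorelSpace E]
    (hψ : ‖ψ‖ = 1) (hΨ : ‖Ψ‖ = 1) {U : Set E} (hU : U ⊆ 𝕜 ∙ Ψ) {d : ℝ} (hd : 0 < d) :
    μH[d] ((𝕜 ∙ ψ).starProjection '' U) = (‖⟪ψ, Ψ⟫_𝕜‖₊ : ℝ≥0∞) ^ d * μH[d] U := by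
  refine hausdorffMeasure_image_of_edist_eq (fun x hx y hy => ?_) hd
  rw [edist_eq_enorm_sub, edist_eq_enorm_sub, enorm_eq_nnnorm, enorm_eq_nnnorm, ← map_sub,
    nnnorm_starProjection_unit_singleton_of_mem_span hψ hΨ (Submodule.sub_mem _ (hU hx) (hU hy)),
    ENNReal.coe_mul]

end Projection

theorem ENNReal.ofReal_norm_sq {E : Type*} [SeminormedAddGroup E] (x : E) :
    ENNReal.ofReal (‖x‖ ^ 2) = (‖x‖₊ : ℝ≥0∞) ^ (2 : ℝ) := by
  rw [ENNReal.rpow_two, ENNReal.ofReal_pow (norm_nonneg x), ofReal_norm, enorm_eq_nnnorm]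

theorem stmt16_general {H : Type*} [NormedAddCommGroup H] [InnerProductSpace ℂ H]
    [MeasurableSpace H] [BorelSpace H]
    (ψ₁ ψ₂ : H) (h₁ : ‖ψ₁‖ = 1) (h₂ : ‖ψ₂‖ = 1) (h₁₂ : (inner ℂ ψ₁ ψ₂ : ℂ) = 0)
    (c₁ c₂ : ℂ) (hc : ‖c₁‖ ^ 2 + ‖c₂‖ ^ 2 = 1)
    (Ψ : H) (hΨ : Ψ = c₁ • ψ₁ + c₂ • ψ₂)
    (U : Set H) (hU : U ⊆ (Submodule.span ℂ {Ψ} : Submodule ℂ H)) :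
    μH[2] ((fun x => (Submodule.orthogonalProjectionOnto (Submodule.span ℂ {ψ₁}) x : H)) '' U)
        = ENNReal.ofReal (‖c₁‖ ^ 2) * μH[2] U
    ∧ μH[2] ((fun x => (Submodule.orthogonalProjectionOnto (Submodule.span ℂ {ψ₂}) x : H)) '' U)
        = ENNReal.ofReal (‖c₂‖ ^ 2) * μH[2] U
    ∧ μH[2] ((fun x => (Submodule.orthogonalProjectionOnto (Submodule.span ℂ {ψ₁}) x : H)) '' U)
        + μH[2] ((fun x => (Submodule.orthogonalProjectionOnto (Submodule.span ℂ {ψ₂}) x : H)) '' U)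
      = μH[2] U := by
  have hΨ_norm : ‖Ψ‖ = 1 := by
    have hperp : ⟪c₁ • ψ₁, c₂ • ψ₂⟫_ℂ = 0 := by simp [h₁₂]
    rw [← pow_eq_one_iff_of_nonneg (norm_nonneg _) two_ne_zero, hΨ,
      norm_add_sq (𝕜 := ℂ), hperp, map_zero, mul_zero, add_zero, norm_smul, norm_smul, h₁, h₂,
      mul_one, mul_one, hc]
  have hproj {ψ : H} {c : ℂ} (hψ : ‖ψ‖ = 1) (hinner : ⟪ψ, Ψ⟫_ℂ = c) :
      μH[2] ((fun x => (Submodule.orthogonalProjectionOnto (ℂ ∙ ψ) x : H)) '' U)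
        = ENNReal.ofReal (‖c‖ ^ 2) * μH[2] U := by
    simp_rw [Submodule.coe_orthogonalProjectionOnto_apply]
    rw [hausdorffMeasure_starProjection_image_of_subset_span hψ hΨ_norm hU two_pos, hinner,
      ENNReal.ofReal_norm_sq]
  have h₁' := hproj (c := c₁) h₁ (by simp [hΨ, h₁₂, h₁])
  have h₂' := hproj (c := c₂) h₂ (by simp [hΨ, inner_eq_zero_symm.mp h₁₂, h₂])
  refine ⟨h₁', h₂', ?_⟩
  rw [h₁', h₂', ← add_mul, ← ENNReal.ofReal_add (by positivity) (by positivity), hc,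
    ENNReal.ofReal_one, one_mul]

/-- For `Ψ = c₁ψ₁ + c₂ψ₂` with `ψ₁, ψ₂` orthonormal and `|c₁|² + |c₂|² = 1`,
and any measurable `U ⊆ ℂΨ` of finite positive 2-dimensional Hausdorff measure, the
orthogonal projections `W₁, W₂` of `U` onto `ℂψ₁, ℂψ₂` satisfy `|W₁| = |c₁|²|U|`,
`|W₂| = |c₂|²|U|` and `|W₁| + |W₂| = |U|`. -/
theorem stmt16 {H : Type*} [NormedAddCommGroup H] [InnerProductSpace ℂ H] [CompleteSpace H]
    [MeasurableSpace H] [BorelSpace H]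
    (ψ₁ ψ₂ : H) (h₁ : ‖ψ₁‖ = 1) (h₂ : ‖ψ₂‖ = 1) (h₁₂ : (inner ℂ ψ₁ ψ₂ : ℂ) = 0)
    (c₁ c₂ : ℂ) (hc : ‖c₁‖ ^ 2 + ‖c₂‖ ^ 2 = 1)
    (Ψ : H) (hΨ : Ψ = c₁ • ψ₁ + c₂ • ψ₂)
    (U : Set H) (hU : U ⊆ (Submodule.span ℂ {Ψ} : Submodule ℂ H)) (hUm : MeasurableSet U)
    (hU0 : 0 < μH[2] U) (hUt : μH[2] U < ⊤) :
    μH[2] ((fun x => (Submodule.orthogonalProjectionOnto (Submodule.span ℂ {ψ₁}) x : H)) '' U)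
        = ENNReal.ofReal (‖c₁‖ ^ 2) * μH[2] U
    ∧ μH[2] ((fun x => (Submodule.orthogonalProjectionOnto (Submodule.span ℂ {ψ₂}) x : H)) '' U)
        = ENNReal.ofReal (‖c₂‖ ^ 2) * μH[2] U
    ∧ μH[2] ((fun x => (Submodule.orthogonalProjectionOnto (Submodule.span ℂ {ψ₁}) x : H)) '' U)
        + μH[2] ((fun x => (Submodule.orthogonalProjectionOnto (Submodule.span ℂ {ψ₂}) x : H)) '' U)
      = μH[2] U :=
  stmt16_general ψ₁ ψ₂ h₁ h₂ h₁₂ c₁ c₂ hc Ψ hΨ U hU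
end
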